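/- If q : [t₁, t₂] → ℝⁿ is a smooth curve with total energy H(q(t), q̇(t)) = E constant and q̇(t) ≠ 0 for all t, then the Maupertuis action ∫ 2T(q(t), q̇(t)) dt equals the arc length of the curve q with respect to the Jacobi metric ᴶg_q(v, v) = 2(E − U(q))·vᵀM(q)v, i.e. ∫_{t₁}^{t₂} 2T dt = ∫_{t₁}^{t₂} √(2(E − U(q(t)))·q̇(t)ᵀM(q(t))q̇(t)) dt. -/

import Mathlib

open Matrix intervalIntegral

/-- For a smooth curve of constant total energy `E` with nonvanishing velocity,
the Maupertuis action `∫ 2T dt` equals the arc length with respect to the Jacobi metric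
`ᴶg_q(v,v) = 2(E - U(q)) vᵀ M(q) v`. -/
theorem maupertuis_action_eq_jacobi_arc_length
    (n : ℕ)
    (M : (Fin n → ℝ) → Matrix (Fin n) (Fin n) ℝ)
    (U : (Fin n → ℝ) → ℝ)
    (hMsmooth : ∀ i j, ContDiff ℝ (⊤ : ℕ∞) (fun x => M x i j))
    (hMsymm : ∀ x, (M x).IsSymm)
    (hMpos : ∀ x, (M x).PosDef)
    (hUsmooth : ContDiff ℝ (⊤ : ℕ∞) U)
    (E : ℝ) (t₁ t₂ : ℝ)
    (q : ℝ → (Fin n → ℝ))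
    (hq : ContDiff ℝ (⊤ : ℕ∞) q)
    (hvel : ∀ t, deriv q t ≠ 0)
    (henergy : ∀ t,
      (1/2) * ((deriv q t) ⬝ᵥ (M (q t)).mulVec (deriv q t)) + U (q t) = E)
    (hE : ∀ t, U (q t) < E) :
    ∫ t in t₁..t₂, 2 * ((1/2) * ((deriv q t) ⬝ᵥ (M (q t)).mulVec (deriv q t))) =
    ∫ t in t₁..t₂,
      Real.sqrt (2 * (E - U (q t)) * ((deriv q t) ⬝ᵥ (M (q t)).mulVec (deriv q t))) := by
  apply intervalIntegral.integral_congr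
  intro t _
  have hK : 2 * (E - U (q t)) = (deriv q t) ⬝ᵥ (M (q t)).mulVec (deriv q t) := by
    have := henergy t; linarith
  have hpos : 0 ≤ (deriv q t) ⬝ᵥ (M (q t)).mulVec (deriv q t) :=
    ((hMpos (q t)).dotProduct_mulVec_pos (hvel t)).le
  simp only []
  rw [hK, Real.sqrt_mul_self hpos]
  ring
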